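/- Let T be a rigid object in C and let End_C(T)^op be the opposite of its endomorphism algebra. A map f : X → Y in C belongs to the class S̃ if and only if the induced map Hom_C(T, f) : Hom_C(T, X) → Hom_C(T, Y) of End_C(T)^op-modules is an isomorphism. -/

import Mathlib

/-!
Common setup: `C` is a Hom-finite, Krull-Schmidt (= idempotent complete, given
Hom-finiteness over a field), `k`-linear triangulated category with suspension
functor `Σ = shiftFunctor C (1 : ℤ)`, and `T` is a rigid object of `C`.
-/

noncomputable section

open CategoryTheory CategoryTheory.Limits CategoryTheory.Pretriangulated

universe v u

namespace PaperBM

variable {C : Type u} [Category.{v} C] [Preadditive C] [HasZeroObject C]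
  [HasShift C ℤ] [∀ n : ℤ, (shiftFunctor C n).Additive] [Pretriangulated C]
  [HasFiniteBiproducts C]

/-- `X` lies in `add T`: it is a direct summand of a finite direct sum of copies of `T`. -/
def memAdd (T X : C) : Prop :=
  ∃ (n : ℕ) (s : X ⟶ ⨁ (fun _ : Fin n => T)) (r : (⨁ fun _ : Fin n => T) ⟶ X), s ≫ r = 𝟙 X

/-- `T` is rigid: `Hom_C(T, ΣT) = 0`. -/
def IsRigidObj (T : C) : Prop := ∀ f : T ⟶ (shiftFunctor C (1 : ℤ)).obj T, f = 0

/-- `Y ∈ T^⊥`, i.e. `Hom_C(X, ΣY) = 0` for all `X ∈ add T`. -/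
def memTperp (T Y : C) : Prop :=
  ∀ (X : C), memAdd T X → ∀ f : X ⟶ (shiftFunctor C (1 : ℤ)).obj Y, f = 0

/-- `Y ∈ ⊥T`, i.e. `Hom_C(Y, ΣX) = 0` for all `X ∈ add T`. -/
def memPerpT (T Y : C) : Prop :=
  ∀ (X : C), memAdd T X → ∀ f : Y ⟶ (shiftFunctor C (1 : ℤ)).obj X, f = 0

/-- `Y ∈ ΣT^⊥`, the image of `T^⊥` under the suspension `Σ`. -/
def memSigmaTperp (T Y : C) : Prop :=
  ∃ Z : C, memTperp T Z ∧ Nonempty (Y ≅ (shiftFunctor C (1 : ℤ)).obj Z)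

/-- The map `f` factors through an object belonging to the class `P` of objects. -/
def FactorsThru (P : C → Prop) {A B : C} (f : A ⟶ B) : Prop :=
  ∃ (Z : C) (g : A ⟶ Z) (h : Z ⟶ B), P Z ∧ g ≫ h = f

/-- The class `S̃` of maps `f : X ⟶ Y` such that in a completion
`Σ⁻¹Z →h X →f Y →g Z` of `f` to a triangle (where `A` plays the role of `Σ⁻¹Z`,
so that `Z = ΣA`), both `g` and `h` factor through an object of `ΣT^⊥`. -/
def Stilde (T : C) : MorphismProperty C := fun X Y f =>
  ∃ (A : C) (h : A ⟶ X) (g : Y ⟶ (shiftFunctor C (1 : ℤ)).obj A),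
    (Triangle.mk h f g ∈ distTriang C) ∧
    FactorsThru (memSigmaTperp T) g ∧ FactorsThru (memSigmaTperp T) h

/-- The class `S` of maps `f : X ⟶ Y` such that in a completion
`Σ⁻¹Z →h X →f Y →g Z` of `f` to a triangle (where `A` plays the role of `Σ⁻¹Z`,
so that `Z = ΣA`), `g` factors through an object of `ΣT^⊥` and `Σ⁻¹Z ∈ ΣT^⊥`. -/
def Sclass (T : C) : MorphismProperty C := fun X Y f =>
  ∃ (A : C) (h : A ⟶ X) (g : Y ⟶ (shiftFunctor C (1 : ℤ)).obj A),
    (Triangle.mk h f g ∈ distTriang C) ∧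
    FactorsThru (memSigmaTperp T) g ∧ memSigmaTperp T A

/-- `X ∈ C(T)`: there is a triangle `T₁ → T₀ → X → ΣT₁` with `T₀, T₁ ∈ add T`. -/
def memCT (T X : C) : Prop :=
  ∃ (T₁ T₀ : C) (a : T₁ ⟶ T₀) (b : T₀ ⟶ X) (c : X ⟶ (shiftFunctor C (1 : ℤ)).obj T₁),
    memAdd T T₁ ∧ memAdd T T₀ ∧ (Triangle.mk a b c ∈ distTriang C)

/-- `f : X₀ ⟶ Y` is a right `P`-approximation of `Y`. -/
def IsRightApprox (P : C → Prop) {X₀ Y : C} (f : X₀ ⟶ Y) : Prop :=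
  P X₀ ∧ ∀ (W : C), P W → ∀ g : W ⟶ Y, ∃ g' : W ⟶ X₀, g' ≫ f = g

/-- `f : Y ⟶ X₀` is a left `P`-approximation of `Y`. -/
def IsLeftApprox (P : C → Prop) {Y X₀ : C} (f : Y ⟶ X₀) : Prop :=
  P X₀ ∧ ∀ (W : C), P W → ∀ g : Y ⟶ W, ∃ g' : X₀ ⟶ W, f ≫ g' = g

/-- The map `f : X₀ ⟶ Y` is right minimal. -/
def IsRightMinimal {X₀ Y : C} (f : X₀ ⟶ Y) : Prop :=
  ∀ g : X₀ ⟶ X₀, g ≫ f = f → IsIso g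

/-- The functor `H = Hom_C(T, -) : C ⥤ Mod End_C(T)ᵒᵖ`.  Here, with Mathlib's
conventions, the endomorphism ring `End (Opposite.op T)` of `T` viewed in `Cᵒᵖ` plays
the role of `End_C(T)ᵒᵖ`, so that each `Hom_C(T, X)` is a left module over it. -/
def endOpRingHom (T : C) : End (Opposite.op T) →+* (End T)ᵐᵒᵖ where
  toFun r := MulOpposite.op r.unop
  map_one' := rfl
  map_mul' _ _ := rfl
  map_zero' := rfl
  map_add' _ _ := rfl

abbrev homFunctor (T : C) : C ⥤ ModuleCat.{v} (End (Opposite.op T)) :=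
  preadditiveCoyonedaObj T ⋙ ModuleCat.restrictScalars.{v} (endOpRingHom T)

/-- The predicate on `End_C(T)ᵒᵖ`-modules of being finite-dimensional (equivalently,
since `End_C(T)` is a finite-dimensional algebra, finitely generated). -/
abbrev isFinDim (T : C) : ModuleCat.{v} (End (Opposite.op T)) → Prop :=
  fun M => Module.Finite (End (Opposite.op T)) M

/-- The category `mod End_C(T)ᵒᵖ` of finite-dimensional `End_C(T)ᵒᵖ`-modules. -/
abbrev fdMod (T : C) := ObjectProperty.FullSubcategory (isFinDim T)

/-- The ideal relation on `C(T)` of maps factoring through an object of `ΣT^⊥`. -/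
def homRelCT (T : C) : HomRel (ObjectProperty.FullSubcategory (memCT T)) :=
  fun A B f g => FactorsThru (memSigmaTperp T) ((f.hom - g.hom : A.obj ⟶ B.obj))

/-- The ideal relation on `C(T)` of maps factoring through an object of `add ΣT`. -/
def homRelCTadd (T : C) : HomRel (ObjectProperty.FullSubcategory (memCT T)) :=
  fun A B f g => FactorsThru (memAdd ((shiftFunctor C (1 : ℤ)).obj T)) ((f.hom - g.hom : A.obj ⟶ B.obj))

/-- The ideal relation on `C` of maps factoring through an object of `add ΣT`. -/
def homRelAdd (T : C) : HomRel C :=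
  fun A B f g => FactorsThru (memAdd ((shiftFunctor C (1 : ℤ)).obj T)) (f - g)

end PaperBM

open PaperBM

/-!
In a triangle `A →h X →f Y →g ΣA`, the map `Hom_C(T, f)` is injective iff every map `T → A`
dies under `h`, and surjective iff every map `T → Y` dies under `g`. An object lies in `ΣT^⊥`
iff it receives no nonzero map from `T`, so a map `h : A → E` factoring through `ΣT^⊥` kills
`Hom(T, A)`. Conversely, if it does, take a right `add T`-approximation `α : Tⁿ → A` (which
exists by Hom-finiteness) with cone `B`; rigidity of `T` gives `Hom(T, B) = 0`, so `B ∈ ΣT^⊥`,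
and `h` factors through `B` because `α ≫ h = 0`.
-/

namespace PaperBM

variable {C : Type u} [Category.{v} C] [Preadditive C]

lemma hom_eq_zero_of_iso {T W W' : C} (e : W ≅ W') (hW : ∀ u : T ⟶ W, u = 0)
    (u : T ⟶ W') : u = 0 :=
  calc u = (u ≫ e.inv) ≫ e.hom := by simp
    _ = 0 := by rw [hW (u ≫ e.inv), zero_comp]

lemma isIso_homFunctor_map_iff {T X Y : C} (f : X ⟶ Y) :
    IsIso ((homFunctor T).map f) ↔ Function.Bijective (fun x : T ⟶ X => x ≫ f) :=
  ConcreteCategory.isIso_iff_bijective ((homFunctor T).map f)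

section Biproducts

variable [HasFiniteBiproducts C]

lemma memAdd_self (T : C) : memAdd T T :=
  ⟨1, biproduct.lift fun _ => 𝟙 T, biproduct.π _ 0, by simp⟩

lemma hom_eq_zero_of_memAdd {T V W : C} (hV : memAdd T V) (hW : ∀ u : T ⟶ W, u = 0)
    (g : V ⟶ W) : g = 0 := by
  obtain ⟨n, s, r, hsr⟩ := hV
  have hr : r ≫ g = 0 := biproduct.hom_ext' _ _ fun j => by
    rw [comp_zero, ← Category.assoc]
    exact hW _
  rw [← Category.id_comp g, ← hsr, Category.assoc, hr, comp_zero]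

lemma exists_biproduct_hom_surjective_comp (k : Type*) [Field k] [Linear k C]
    [∀ X Y : C, FiniteDimensional k (X ⟶ Y)] (T A : C) :
    ∃ (n : ℕ) (α : (⨁ fun _ : Fin n => T) ⟶ A),
      Function.Surjective (fun v : T ⟶ ⨁ (fun _ : Fin n => T) => v ≫ α) := by
  let b := Module.finBasis k (T ⟶ A)
  refine ⟨_, biproduct.desc fun i => b i, fun u => ⟨biproduct.lift fun i => b.repr u i • 𝟙 T, ?_⟩⟩
  simp only [biproduct.lift_desc, Linear.smul_comp, Category.id_comp]
  exact b.sum_repr u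

variable [HasShift C ℤ]

lemma hom_to_shift_biproduct_eq_zero [(shiftFunctor C (1 : ℤ)).Additive] {T W : C}
    (hW : ∀ u : W ⟶ (shiftFunctor C (1 : ℤ)).obj T, u = 0) {n : ℕ}
    (u : W ⟶ (shiftFunctor C (1 : ℤ)).obj (⨁ fun _ : Fin n => T)) : u = 0 := by
  have htotal : (shiftFunctor C (1 : ℤ)).map (𝟙 (⨁ fun _ : Fin n => T)) =
      ∑ j, (shiftFunctor C (1 : ℤ)).map (biproduct.π _ j) ≫
        (shiftFunctor C (1 : ℤ)).map (biproduct.ι _ j) := by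
    simp only [← biproduct.total, Functor.map_sum, Functor.map_comp]
  rw [← Category.comp_id u, ← (shiftFunctor C (1 : ℤ)).map_id, htotal, Preadditive.comp_sum]
  exact Finset.sum_eq_zero fun j _ => by rw [← Category.assoc, hW (u ≫ _), zero_comp]

lemma memSigmaTperp_iff {T W : C} : memSigmaTperp T W ↔ ∀ u : T ⟶ W, u = 0 := by
  constructor
  · rintro ⟨Z, hZ, ⟨e⟩⟩
    exact hom_eq_zero_of_iso e.symm (hZ T (memAdd_self T))
  · intro hW
    let e := (shiftEquiv C (1 : ℤ)).counitIso.app W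
    exact ⟨_, fun V hV => hom_eq_zero_of_memAdd hV (hom_eq_zero_of_iso e.symm hW), ⟨e.symm⟩⟩

end Biproducts

variable [HasZeroObject C] [HasShift C ℤ] [∀ n : ℤ, (shiftFunctor C n).Additive]
  [Pretriangulated C]

section Triangle

variable {T A X Y : C} {h : A ⟶ X} {f : X ⟶ Y} {g : Y ⟶ (shiftFunctor C (1 : ℤ)).obj A}

lemma injective_comp_iff_of_distTriang (hTri : Triangle.mk h f g ∈ distTriang C) :
    Function.Injective (fun x : T ⟶ X => x ≫ f) ↔ ∀ u : T ⟶ A, u ≫ h = 0 := by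
  have hhf : h ≫ f = 0 := comp_distTriang_mor_zero₁₂ _ hTri
  change Function.Injective (Preadditive.rightComp T f) ↔ _
  rw [injective_iff_map_eq_zero]
  constructor
  · intro hinj u
    exact hinj _ (show (u ≫ h) ≫ f = 0 by rw [Category.assoc, hhf, comp_zero])
  · intro hzero x hx
    obtain ⟨u, rfl⟩ := Triangle.coyoneda_exact₂ _ hTri x hx
    exact hzero u

lemma surjective_comp_iff_of_distTriang (hTri : Triangle.mk h f g ∈ distTriang C) :
    Function.Surjective (fun x : T ⟶ X => x ≫ f) ↔ ∀ y : T ⟶ Y, y ≫ g = 0 := by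
  have hfg : f ≫ g = 0 := comp_distTriang_mor_zero₂₃ _ hTri
  constructor
  · intro hsurj y
    obtain ⟨x, rfl⟩ := hsurj y
    rw [Category.assoc, hfg, comp_zero]
  · intro hzero y
    obtain ⟨x, hx⟩ := Triangle.coyoneda_exact₃ _ hTri y (hzero y)
    exact ⟨x, hx.symm⟩

end Triangle

variable [HasFiniteBiproducts C]

lemma hom_to_cone_eq_zero_of_surjective {T : C} (hT : IsRigidObj T) {n : ℕ} {A B : C}
    {α : (⨁ fun _ : Fin n => T) ⟶ A} {β : A ⟶ B}
    {γ : B ⟶ (shiftFunctor C (1 : ℤ)).obj (⨁ fun _ : Fin n => T)}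
    (hTri : Triangle.mk α β γ ∈ distTriang C)
    (hα : Function.Surjective (fun v : T ⟶ ⨁ (fun _ : Fin n => T) => v ≫ α))
    (u : T ⟶ B) : u = 0 := by
  have hαβ : α ≫ β = 0 := comp_distTriang_mor_zero₁₂ _ hTri
  obtain ⟨w, rfl⟩ := Triangle.coyoneda_exact₃ _ hTri u (hom_to_shift_biproduct_eq_zero hT _)
  obtain ⟨v, rfl⟩ := hα w
  show (v ≫ α) ≫ β = 0
  rw [Category.assoc, hαβ, comp_zero]

lemma factorsThru_memSigmaTperp_iff {T : C} (hT : IsRigidObj T) (k : Type*) [Field k]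
    [Linear k C] [∀ X Y : C, FiniteDimensional k (X ⟶ Y)] {A E : C} (h : A ⟶ E) :
    FactorsThru (memSigmaTperp T) h ↔ ∀ u : T ⟶ A, u ≫ h = 0 := by
  constructor
  · rintro ⟨W, h₁, h₂, hW, rfl⟩ u
    rw [← Category.assoc, memSigmaTperp_iff.mp hW (u ≫ h₁), zero_comp]
  · intro hzero
    obtain ⟨n, α, hα⟩ := exists_biproduct_hom_surjective_comp k T A
    obtain ⟨B, β, γ, hTri⟩ := distinguished_cocone_triangle α
    have hαh : α ≫ h = 0 := biproduct.hom_ext' _ _ fun j => by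
      rw [← Category.assoc, hzero, comp_zero]
    obtain ⟨h', hh'⟩ := Triangle.yoneda_exact₂ _ hTri h hαh
    exact ⟨B, β, h', memSigmaTperp_iff.mpr (hom_to_cone_eq_zero_of_surjective hT hTri hα),
      hh'.symm⟩

end PaperBM

/-- A map `f : X ⟶ Y` belongs to `S̃` if and only if the induced map
`Hom_C(T, f) : Hom_C(T, X) ⟶ Hom_C(T, Y)` of `End_C(T)ᵒᵖ`-modules is an isomorphism. -/
theorem statement_6 {C : Type u} [Category.{v} C] [Preadditive C] [HasZeroObject C]
    [HasShift C ℤ] [∀ n : ℤ, (shiftFunctor C n).Additive] [Pretriangulated C]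
    [HasFiniteBiproducts C]
    {k : Type*} [Field k] [CategoryTheory.Linear k C]
    [∀ X Y : C, FiniteDimensional k (X ⟶ Y)] [IsIdempotentComplete C]
    (T : C) (hT : IsRigidObj T) {X Y : C} (f : X ⟶ Y) :
    Stilde T f ↔ IsIso ((homFunctor T).map f) := by
  have hStilde : ∀ {A : C} {h : A ⟶ X} {g : Y ⟶ (shiftFunctor C (1 : ℤ)).obj A},
      Triangle.mk h f g ∈ distTriang C →
      (FactorsThru (memSigmaTperp T) g ∧ FactorsThru (memSigmaTperp T) h ↔
        IsIso ((homFunctor T).map f)) := fun hTri => by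
    rw [isIso_homFunctor_map_iff, Function.Bijective, injective_comp_iff_of_distTriang hTri,
      surjective_comp_iff_of_distTriang hTri, factorsThru_memSigmaTperp_iff hT k,
      factorsThru_memSigmaTperp_iff hT k, and_comm]
  constructor
  · rintro ⟨A, h, g, hTri, hfac⟩
    exact (hStilde hTri).mp hfac
  · intro hiso
    obtain ⟨A, h, g, hTri⟩ := distinguished_cocone_triangle₁ f
    exact ⟨A, h, g, hTri, (hStilde hTri).mpr hiso⟩
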